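/- Fix α > 0, σ² > 0 and ε ∈ (0, (1/α) ln((α+σ²)/σ²)). Define g : [0,∞] → ℝ by g(a) = E[(1 − tanh(a + ξ√a))²] for a < ∞ (ξ standard normal) and g(∞) = 0. Set the threshold θ = (1/α) ln((α+σ²)/σ²) − ε. Define the sequence of functions z_i : ℝ → [0,∞] by: z₀(t) = ∞ for t < 0 and z₀(t) = 0 for t ≥ 0; and for i ≥ 1, z_i(t) = ∞ if w_i(t) > θ and z_i(t) = w_i(t) otherwise, where x_{i-1}(t) = α ∫_{-1/2}^{1/2} g(z_{i-1}(t+τ)) dτ + σ² and w_i(t) = ∫_{-1/2}^{1/2} dτ / x_{i-1}(t+τ). Then for every T > 0 there exists an iteration number I such that z_I(t) = ∞ for all t ≤ T. -/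

import Mathlib

open MeasureTheory ProbabilityTheory
open scoped ENNReal NNReal

/-- Extension of the tanh-estimator mean squared error `g` to `[0,∞]`:
`g(a) = E[(1 − tanh(a + ξ√a))²]` for `a < ∞` (`ξ ~ N(0,1)`) and `g(∞) = 0`. -/
noncomputable def gExt (a : ℝ≥0∞) : ℝ :=
  if a = ⊤ then 0
  else
    ∫ x, (1 - Real.tanh (a.toReal + x * Real.sqrt a.toReal)) ^ 2
      ∂(ProbabilityTheory.gaussianReal 0 1)

/-- Noise-and-interference variance profile produced by the SINR profile `z`. -/
noncomputable def xProfile (α σ2 : ℝ) (z : ℝ → ℝ≥0∞) (t : ℝ) : ℝ :=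
  α * (∫ τ in (-(1 / 2) : ℝ)..(1 / 2), gExt (z (t + τ))) + σ2

/-- SINR profile after one parallel interference cancellation iteration. -/
noncomputable def wProfile (α σ2 : ℝ) (z : ℝ → ℝ≥0∞) (t : ℝ) : ℝ :=
  ∫ τ in (-(1 / 2) : ℝ)..(1 / 2), 1 / xProfile α σ2 z (t + τ)

lemma gauss_integral_eq (f : ℝ → ℝ) :
    ∫ x, f x ∂(gaussianReal 0 1) = ∫ x, gaussianPDFReal 0 1 x * f x := by
  rw [gaussianReal_of_var_ne_zero 0 one_ne_zero, gaussianPDF_def]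
  have h : (fun x => ENNReal.ofReal (gaussianPDFReal 0 1 x)) =
      (fun x => ((Real.toNNReal (gaussianPDFReal 0 1 x) : ℝ≥0) : ℝ≥0∞)) := rfl
  rw [h, integral_withDensity_eq_integral_smul
    (measurable_gaussianPDFReal 0 1).real_toNNReal f]
  congr 1
  ext x
  rw [NNReal.smul_def, smul_eq_mul, Real.coe_toNNReal _ (gaussianPDFReal_nonneg 0 1 x)]

lemma gauss_pdf_reflect (c x : ℝ) :
    gaussianPDFReal 0 1 (-(2 * c + x)) =
      gaussianPDFReal 0 1 x * Real.exp (-(2 * (c * c + x * c))) := by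
  simp only [gaussianPDFReal, sub_zero, NNReal.coe_one, mul_one]
  rw [mul_assoc, ← Real.exp_add]
  congr 1
  ring_nf

lemma Real.continuous_tanh' : Continuous Real.tanh := by
  have : Real.tanh = fun x => Real.sinh x / Real.cosh x := funext Real.tanh_eq_sinh_div_cosh
  rw [this]
  exact Real.continuous_sinh.div Real.continuous_cosh fun x => (Real.cosh_pos x).ne'

lemma tanh_sq_le_one (u : ℝ) : Real.tanh u ^ 2 ≤ 1 := by
  rw [Real.tanh_eq_sinh_div_cosh, div_pow, div_le_one (by positivity)]
  nlinarith [Real.cosh_sq u]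

lemma tanh_identity (u : ℝ) :
    Real.tanh u * (1 + Real.exp (-(2 * u))) = 1 - Real.exp (-(2 * u)) := by
  have h2 : Real.exp u ≠ 0 := (Real.exp_pos u).ne'
  have h3 : Real.exp (-(2 * u)) = Real.exp (-u) * Real.exp (-u) := by
    rw [← Real.exp_add]; ring_nf
  have h4 : Real.exp (-u) = (Real.exp u)⁻¹ := Real.exp_neg u
  have hc : Real.exp u + (Real.exp u)⁻¹ ≠ 0 := by positivity
  rw [Real.tanh_eq_sinh_div_cosh, Real.sinh_eq, Real.cosh_eq, h3, h4]
  field_simp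

lemma core_ineq (u : ℝ) :
    (1 - Real.tanh u) ^ 2 + (1 - Real.tanh (-u)) ^ 2 * Real.exp (-(2 * u)) ≤
      1 + Real.exp (-(2 * u)) := by
  rw [Real.tanh_neg]
  nlinarith [tanh_identity u, sq_nonneg (Real.tanh u), Real.exp_pos (-(2 * u))]

lemma G_le_one {b : ℝ} (hb : 0 ≤ b) :
    ∫ x, (1 - Real.tanh (b + x * Real.sqrt b)) ^ 2 ∂(gaussianReal 0 1) ≤ 1 := by
  set c := Real.sqrt b with hcdef
  have hc2 : c * c = b := Real.mul_self_sqrt hb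
  set φ := gaussianPDFReal 0 1 with hφdef
  have hφnn : ∀ x, 0 ≤ φ x := gaussianPDFReal_nonneg 0 1
  have hφint : Integrable φ := integrable_gaussianPDFReal 0 1
  set F : ℝ → ℝ := fun x => φ x * (1 - Real.tanh (b + x * c)) ^ 2 with hFdef
  -- measurability & integrability of F
  have hcont : Continuous fun x : ℝ => (1 - Real.tanh (b + x * c)) ^ 2 := by
    apply Continuous.pow
    exact continuous_const.sub (Real.continuous_tanh'.comp (by continuity))
  have hFint : Integrable F := by
    have hb4 : ∃ C, ∀ x, ‖(1 - Real.tanh (b + x * c)) ^ 2‖ ≤ C := by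
      refine ⟨4, fun x => ?_⟩
      rw [Real.norm_eq_abs, abs_of_nonneg (sq_nonneg _)]
      nlinarith [tanh_sq_le_one (b + x * c)]
    have := hφint.bdd_mul hcont.aestronglyMeasurable (Filter.Eventually.of_forall hb4.choose_spec)
    exact this.congr (Filter.Eventually.of_forall fun x => mul_comm _ _)
  -- reflected integrand
  have hreflect : ∀ x, F (-(2 * c + x)) =
      φ x * ((1 - Real.tanh (-(b + x * c))) ^ 2 * Real.exp (-(2 * (b + x * c)))) := by
    intro x
    have h1 : b + (-(2 * c + x)) * c = -(b + x * c) := by nlinarith [hc2]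
    simp only [hFdef, h1]
    rw [hφdef]
    rw [show (-(2 * c + x)) = (-(2 * c + x)) from rfl]
    have := gauss_pdf_reflect c x
    rw [hc2] at this
    rw [this]
    ring
  have hFrint : Integrable fun x => F (-(2 * c + x)) :=
    (hFint.comp_neg).comp_add_left (2 * c)
  have hφrint : Integrable fun x => φ (-(2 * c + x)) :=
    (hφint.comp_neg).comp_add_left (2 * c)
  -- change of variables
  have hcov : ∫ x, F (-(2 * c + x)) = ∫ x, F x := by
    rw [integral_add_left_eq_self (fun y => F (-y)) (2 * c)]
    exact integral_neg_eq_self F volume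
  have hcovφ : ∫ x, φ (-(2 * c + x)) = ∫ x, φ x := by
    rw [integral_add_left_eq_self (fun y => φ (-y)) (2 * c)]
    exact integral_neg_eq_self φ volume
  -- pointwise bound
  have hpt : ∀ x, F x + F (-(2 * c + x)) ≤ φ x + φ (-(2 * c + x)) := by
    intro x
    rw [hreflect x]
    have hφr : φ (-(2 * c + x)) = φ x * Real.exp (-(2 * (b + x * c))) := by
      rw [hφdef]
      have := gauss_pdf_reflect c x
      rw [hc2] at this
      exact this
    rw [hφr, hFdef]
    have := core_ineq (b + x * c)
    calc φ x * (1 - Real.tanh (b + x * c)) ^ 2 +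
          φ x * ((1 - Real.tanh (-(b + x * c))) ^ 2 * Real.exp (-(2 * (b + x * c))))
        = φ x * ((1 - Real.tanh (b + x * c)) ^ 2 +
            (1 - Real.tanh (-(b + x * c))) ^ 2 * Real.exp (-(2 * (b + x * c)))) := by ring
      _ ≤ φ x * (1 + Real.exp (-(2 * (b + x * c)))) :=
          mul_le_mul_of_nonneg_left (core_ineq _) (hφnn x)
      _ = φ x + φ x * Real.exp (-(2 * (b + x * c))) := by ring
  -- put together
  have key : (∫ x, F x) + (∫ x, F x) ≤ 2 := by
    have h1 : (∫ x, F x) + (∫ x, F x) = ∫ x, (F x + F (-(2 * c + x))) := by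
      rw [integral_add hFint hFrint, hcov]
    rw [h1]
    have h2 : ∫ x, (φ x + φ (-(2 * c + x))) = 2 := by
      rw [integral_add hφint hφrint, hcovφ, integral_gaussianPDFReal_eq_one 0 one_ne_zero]
      norm_num
    calc ∫ x, (F x + F (-(2 * c + x))) ≤ ∫ x, (φ x + φ (-(2 * c + x))) :=
          integral_mono (hFint.add hFrint) (hφint.add hφrint) hpt
      _ = 2 := h2
  rw [gauss_integral_eq]
  linarith [key]

lemma gExt_top : gExt ⊤ = 0 := if_pos rfl

lemma gExt_nonneg (a : ℝ≥0∞) : 0 ≤ gExt a := by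
  unfold gExt
  split
  · exact le_refl 0
  · exact integral_nonneg fun x => sq_nonneg _

lemma gExt_le_one (a : ℝ≥0∞) : gExt a ≤ 1 := by
  unfold gExt
  split
  · norm_num
  · exact G_le_one ENNReal.toReal_nonneg

lemma continuous_G : Continuous fun b : ℝ =>
    ∫ x, (1 - Real.tanh (b + x * Real.sqrt b)) ^ 2 ∂(gaussianReal 0 1) := by
  apply continuous_of_dominated (bound := fun _ => 4)
  · intro b
    exact (Continuous.aestronglyMeasurable (by
      exact (continuous_const.sub (Real.continuous_tanh'.comp
        (continuous_const.add (continuous_id.mul continuous_const)))).pow 2))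
  · intro b
    refine Filter.Eventually.of_forall fun x => ?_
    rw [Real.norm_eq_abs, abs_of_nonneg (sq_nonneg _)]
    nlinarith [tanh_sq_le_one (b + x * Real.sqrt b)]
  · exact integrable_const 4
  · refine Filter.Eventually.of_forall fun x => ?_
    exact (continuous_const.sub (Real.continuous_tanh'.comp
      (continuous_id.add (continuous_const.mul Real.continuous_sqrt)))).pow 2

lemma measurable_gExt : Measurable gExt := by
  have h : Measurable fun a : ℝ≥0∞ =>
      ∫ x, (1 - Real.tanh (a.toReal + x * Real.sqrt a.toReal)) ^ 2 ∂(gaussianReal 0 1) :=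
    continuous_G.measurable.comp ENNReal.measurable_toReal
  exact Measurable.ite (measurableSet_singleton ⊤) measurable_const h

lemma intervalIntegrable_of_bdd {f : ℝ → ℝ} {C : ℝ} (hm : Measurable f)
    (hb : ∀ x, |f x| ≤ C) (a b : ℝ) : IntervalIntegrable f volume a b := by
  refine (intervalIntegrable_const (c := C)).mono_fun
    hm.aestronglyMeasurable.restrict ?_
  refine Filter.Eventually.of_forall fun x => ?_
  calc ‖f x‖ = |f x| := rfl
    _ ≤ C := hb x
    _ ≤ ‖C‖ := le_abs_self C

lemma continuous_avg {f : ℝ → ℝ} (hf : ∀ a b, IntervalIntegrable f volume a b) :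
    Continuous fun t => ∫ τ in (-(1 / 2) : ℝ)..(1 / 2), f (t + τ) := by
  have heq : ∀ t : ℝ, (∫ τ in (-(1 / 2) : ℝ)..(1 / 2), f (t + τ)) =
      (∫ u in (0 : ℝ)..(t + 1 / 2), f u) - ∫ u in (0 : ℝ)..(t + -(1 / 2)), f u := by
    intro t
    rw [intervalIntegral.integral_comp_add_left f t,
      ← intervalIntegral.integral_interval_sub_left (hf 0 (t + 1 / 2)) (hf 0 (t + -(1 / 2)))]
  simp only [heq]
  exact ((intervalIntegral.continuous_primitive hf 0).comp
    (continuous_id.add continuous_const)).sub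
    ((intervalIntegral.continuous_primitive hf 0).comp
    (continuous_id.add continuous_const))

section profile

variable {α σ2 : ℝ} {z : ℝ → ℝ≥0∞}

lemma gz_intervalIntegrable (hz : Measurable z) (a b : ℝ) :
    IntervalIntegrable (fun v => gExt (z v)) volume a b := by
  refine intervalIntegrable_of_bdd (measurable_gExt.comp hz) (C := 1) (fun x => ?_) a b
  show |gExt (z x)| ≤ 1
  rw [abs_le]
  exact ⟨by linarith [gExt_nonneg (z x)], gExt_le_one (z x)⟩

lemma xProfile_continuous (hz : Measurable z) : Continuous (xProfile α σ2 z) := by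
  unfold xProfile
  exact (continuous_const.mul (continuous_avg (gz_intervalIntegrable hz))).add continuous_const

lemma xProfile_ge (hα : 0 ≤ α) (hz : Measurable z) (t : ℝ) : σ2 ≤ xProfile α σ2 z t := by
  unfold xProfile
  have h : 0 ≤ ∫ τ in (-(1 / 2) : ℝ)..(1 / 2), gExt (z (t + τ)) :=
    intervalIntegral.integral_nonneg (by norm_num) fun u _ => gExt_nonneg _
  nlinarith

lemma xProfile_le (hα : 0 ≤ α) (hz : Measurable z) {s : ℝ} (hs : ∀ u ≤ s, z u = ⊤) (u : ℝ) :
    xProfile α σ2 z u ≤ α * max 0 (u - s + 1 / 2) + σ2 := by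
  unfold xProfile
  have hJ : (∫ τ in (-(1 / 2) : ℝ)..(1 / 2), gExt (z (u + τ))) ≤ max 0 (u - s + 1 / 2) := by
    rw [intervalIntegral.integral_comp_add_left (fun v => gExt (z v)) u]
    set q := min (u + 1 / 2) (max (u + -(1 / 2)) s) with hqdef
    have hq1 : u + -(1 / 2) ≤ q := le_min (by linarith) (le_max_left _ _)
    have hq2 : q ≤ u + 1 / 2 := min_le_left _ _
    have hsplit : (∫ v in (u + -(1 / 2))..q, gExt (z v)) + (∫ v in q..(u + 1 / 2), gExt (z v))
        = ∫ v in (u + -(1 / 2))..(u + 1 / 2), gExt (z v) :=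
      intervalIntegral.integral_add_adjacent_intervals
        (gz_intervalIntegrable hz _ _) (gz_intervalIntegrable hz _ _)
    have hfirst : (∫ v in (u + -(1 / 2))..q, gExt (z v)) = 0 := by
      rcases le_or_gt s (u + -(1 / 2)) with h | h
      · have hq : q = u + -(1 / 2) := by
          rw [hqdef, max_eq_left h, min_eq_right (by linarith)]
        rw [hq, intervalIntegral.integral_same]
      · have hqs : q ≤ s := by
          rw [hqdef, max_eq_right h.le]; exact min_le_right _ _
        have hz0 : ∀ v ∈ Set.uIcc (u + -(1 / 2)) q, gExt (z v) = (0 : ℝ) := by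
          intro v hv
          rw [Set.uIcc_of_le hq1] at hv
          rw [hs v (le_trans hv.2 hqs), gExt_top]
        calc (∫ v in (u + -(1 / 2))..q, gExt (z v))
            = ∫ _ in (u + -(1 / 2))..q, (0 : ℝ) := intervalIntegral.integral_congr hz0
          _ = 0 := intervalIntegral.integral_zero
    have hsecond : (∫ v in q..(u + 1 / 2), gExt (z v)) ≤ (u + 1 / 2) - q := by
      calc (∫ v in q..(u + 1 / 2), gExt (z v)) ≤ ∫ _ in q..(u + 1 / 2), (1 : ℝ) :=
            intervalIntegral.integral_mono_on hq2 (gz_intervalIntegrable hz _ _)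
              intervalIntegrable_const (fun v _ => gExt_le_one _)
        _ = (u + 1 / 2) - q := by simp
    have hqge : min (u + 1 / 2) s ≤ q := min_le_min (le_refl _) (le_max_right _ _)
    have hend : (u + 1 / 2) - q ≤ max 0 (u - s + 1 / 2) := by
      rcases le_total s (u + 1 / 2) with h | h
      · have : min (u + 1 / 2) s = s := min_eq_right h
        have h2 : u + 1 / 2 - q ≤ u - s + 1 / 2 := by
          rw [this] at hqge; linarith
        exact le_trans h2 (le_max_right _ _)
      · have : min (u + 1 / 2) s = u + 1 / 2 := min_eq_left h
        have h2 : u + 1 / 2 - q ≤ 0 := by rw [this] at hqge; linarith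
        exact le_trans h2 (le_max_left _ _)
    linarith [hsplit, hfirst, hsecond, hend]
  have h0 : (0:ℝ) ≤ max 0 (u - s + 1 / 2) := le_max_left _ _
  nlinarith [mul_le_mul_of_nonneg_left hJ hα]

end profile

section step

variable {α σ2 : ℝ} {z : ℝ → ℝ≥0∞}

lemma wProfile_continuous (hα : 0 ≤ α) (hσ : 0 < σ2) (hz : Measurable z) :
    Continuous (wProfile α σ2 z) := by
  unfold wProfile
  have hxc : Continuous (xProfile α σ2 z) := xProfile_continuous hz
  have hinv : Continuous fun v => 1 / xProfile α σ2 z v :=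
    continuous_const.div hxc fun v => (lt_of_lt_of_le hσ (xProfile_ge hα hz v)).ne'
  exact continuous_avg fun a b => (hinv.intervalIntegrable a b)

end step

lemma integral_one_div_affine {α σ2 δ : ℝ} (hα : 0 < α) (hσ : 0 < σ2) (hδ : 0 < δ) :
    (∫ τ in (-(1 / 2) : ℝ)..(1 / 2), 1 / (α * (δ + τ + 1 / 2) + σ2)) =
      α⁻¹ * Real.log ((α + (α * δ + σ2)) / (α * δ + σ2)) := by
  set k : ℝ := α * (δ + 1 / 2) + σ2 with hk
  have h1 : ∀ τ : ℝ, α * (δ + τ + 1 / 2) + σ2 = α * τ + k := by intro τ; rw [hk]; ring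
  simp_rw [h1]
  rw [intervalIntegral.integral_comp_mul_add (fun y => 1 / y) hα.ne' k]
  have hlo : α * -(1 / 2) + k = α * δ + σ2 := by rw [hk]; ring
  have hhi : α * (1 / 2) + k = α + (α * δ + σ2) := by rw [hk]; ring
  rw [hlo, hhi]
  rw [integral_one_div (by
    refine Set.notMem_uIcc_of_lt ?_ ?_ <;> positivity)]
  rw [smul_eq_mul]

lemma w_gt {α σ2 : ℝ} {z : ℝ → ℝ≥0∞} (hα : 0 < α) (hσ : 0 < σ2) (hz : Measurable z)
    {s δ : ℝ} (hδ : 0 < δ) (hs : ∀ u ≤ s, z u = ⊤) {t : ℝ} (ht : t ≤ s + δ) :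
    α⁻¹ * Real.log ((α + (α * δ + σ2)) / (α * δ + σ2)) ≤ wProfile α σ2 z t := by
  rw [← integral_one_div_affine hα hσ hδ]
  unfold wProfile
  refine intervalIntegral.integral_mono_on (by norm_num) ?_ ?_ ?_
  · refine (ContinuousOn.div continuousOn_const (by fun_prop) fun τ hτ => ?_).intervalIntegrable
    rw [Set.uIcc_of_le (by norm_num : -(1/2:ℝ) ≤ 1/2)] at hτ
    have h1 : -(1/2:ℝ) ≤ τ := hτ.1
    nlinarith
  · have hxc : Continuous fun τ => xProfile α σ2 z (t + τ) :=
      (xProfile_continuous hz).comp (continuous_const.add continuous_id)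
    exact (continuous_const.div hxc fun τ =>
      (lt_of_lt_of_le hσ (xProfile_ge hα.le hz (t + τ))).ne').intervalIntegrable _ _
  · intro τ hτ
    have hτ1 : -(1 / 2 : ℝ) ≤ τ := hτ.1
    have hxpos : 0 < xProfile α σ2 z (t + τ) := lt_of_lt_of_le hσ (xProfile_ge hα.le hz _)
    have hxle : xProfile α σ2 z (t + τ) ≤ α * (δ + τ + 1 / 2) + σ2 := by
      refine le_trans (xProfile_le hα.le hz hs (t + τ)) ?_
      have hmax : max 0 (t + τ - s + 1 / 2) ≤ δ + τ + 1 / 2 :=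
        max_le (by linarith) (by linarith)
      nlinarith [mul_le_mul_of_nonneg_left hmax hα.le]
    exact one_div_le_one_div_of_le hxpos hxle

lemma theta_lt {α σ2 ε δ : ℝ} (hα : 0 < α) (hσ : 0 < σ2) (hε : 0 < ε)
    (hδ : δ = ε * σ2 / 2) :
    (1 / α) * Real.log ((α + σ2) / σ2) - ε <
      α⁻¹ * Real.log ((α + (α * δ + σ2)) / (α * δ + σ2)) := by
  have hδpos : 0 < δ := by rw [hδ]; positivity
  have hA : 0 < α * δ + σ2 := by positivity
  have h1 : Real.log ((α + σ2) / σ2) = Real.log (α + σ2) - Real.log σ2 :=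
    Real.log_div (by positivity) hσ.ne'
  have h2 : Real.log ((α + (α * δ + σ2)) / (α * δ + σ2)) =
      Real.log (α + (α * δ + σ2)) - Real.log (α * δ + σ2) :=
    Real.log_div (by positivity) hA.ne'
  have h3 : Real.log (α + σ2) ≤ Real.log (α + (α * δ + σ2)) :=
    Real.log_le_log (by positivity) (by nlinarith)
  have h4 : Real.log (α * δ + σ2) - Real.log σ2 < α * ε := by
    have : Real.log (α * δ + σ2) - Real.log σ2 = Real.log ((α * δ + σ2) / σ2) :=
      (Real.log_div hA.ne' hσ.ne').symm
    rw [this]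
    have hle : Real.log ((α * δ + σ2) / σ2) ≤ (α * δ + σ2) / σ2 - 1 :=
      Real.log_le_sub_one_of_pos (by positivity)
    have hαε : 0 < α * ε := mul_pos hα hε
    have : (α * δ + σ2) / σ2 - 1 = α * δ / σ2 := by field_simp; ring
    rw [this] at hle
    have : α * δ / σ2 = α * ε / 2 := by rw [hδ]; field_simp
    rw [this] at hle
    linarith
  have key : Real.log (α + σ2) - Real.log σ2 - α * ε <
      Real.log (α + (α * δ + σ2)) - Real.log (α * δ + σ2) := by linarith
  have := mul_lt_mul_of_pos_left key (inv_pos.mpr hα)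
  calc (1 / α) * Real.log ((α + σ2) / σ2) - ε
      = α⁻¹ * (Real.log (α + σ2) - Real.log σ2 - α * ε) := by
        rw [h1, one_div]
        field_simp
    _ < α⁻¹ * (Real.log (α + (α * δ + σ2)) - Real.log (α * δ + σ2)) := this
    _ = α⁻¹ * Real.log ((α + (α * δ + σ2)) / (α * δ + σ2)) := by rw [h2]

/-- Theorem 1 of the paper (dynamical-system form): with threshold
`θ = (1/α)·ln((α+σ²)/σ²) − ε`, the modified SIC iteration started from the step
initialization decodes every packet: for every `T > 0` there is an iteration `I`
with `z_I(t) = ∞` for all `t ≤ T`. -/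
theorem modified_SIC_decodes_everything (α σ2 ε : ℝ) (hα : 0 < α) (hσ : 0 < σ2)
    (hε : 0 < ε) (hε' : ε < (1 / α) * Real.log ((α + σ2) / σ2))
    (θ : ℝ) (hθ : θ = (1 / α) * Real.log ((α + σ2) / σ2) - ε)
    (z : ℕ → ℝ → ℝ≥0∞)
    (hz0 : ∀ t : ℝ, z 0 t = if t < 0 then ⊤ else 0)
    (hzstep : ∀ (i : ℕ) (t : ℝ),
      z (i + 1) t =
        if θ < wProfile α σ2 (z i) t then ⊤
        else ENNReal.ofReal (wProfile α σ2 (z i) t)) :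
    ∀ T : ℝ, 0 < T → ∃ I : ℕ, ∀ t : ℝ, t ≤ T → z I t = ⊤ := by
  set δ : ℝ := ε * σ2 / 2 with hδdef
  have hδpos : 0 < δ := by positivity
  have hθδ : θ < α⁻¹ * Real.log ((α + (α * δ + σ2)) / (α * δ + σ2)) := by
    rw [hθ]; exact theta_lt hα hσ hε hδdef
  have main : ∀ i : ℕ, Measurable (z i) ∧ ∀ t : ℝ, t ≤ -1 + i * δ → z i t = ⊤ := by
    intro i
    induction i with
    | zero =>
      constructor
      · have hfz : z 0 = fun t => if t < 0 then (⊤ : ℝ≥0∞) else 0 := funext hz0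
        rw [hfz]
        exact Measurable.ite measurableSet_Iio measurable_const measurable_const
      · intro t ht
        rw [hz0 t, if_pos]
        push_cast at ht
        linarith
    | succ i ih =>
      obtain ⟨hm, hsat⟩ := ih
      have hs : ∀ u ≤ -1 + i * δ, z i u = ⊤ := fun u hu => hsat u hu
      have hwt : ∀ t : ℝ, t ≤ (-1 + i * δ) + δ → θ < wProfile α σ2 (z i) t := fun t ht =>
        lt_of_lt_of_le hθδ (w_gt hα hσ hm hδpos hs ht)
      have hwc : Continuous (wProfile α σ2 (z i)) := wProfile_continuous hα.le hσ hm
      constructor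
      · have hfz : z (i + 1) = fun t =>
            if θ < wProfile α σ2 (z i) t then (⊤ : ℝ≥0∞)
            else ENNReal.ofReal (wProfile α σ2 (z i) t) := funext (hzstep i)
        rw [hfz]
        exact Measurable.ite (measurableSet_lt measurable_const hwc.measurable)
          measurable_const (ENNReal.measurable_ofReal.comp hwc.measurable)
      · intro t ht
        rw [hzstep i t, if_pos (hwt t (by push_cast at ht ⊢; linarith))]
  intro T hT
  obtain ⟨n, hn⟩ := exists_nat_ge ((T + 1) / δ)
  refine ⟨n, fun t ht => (main n).2 t ?_⟩
  have : (T + 1) ≤ n * δ := by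
    rw [div_le_iff₀ hδpos] at hn
    linarith
  linarith
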